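/- Let (T,*,[[·,·,·]],b) be a finite-dimensional quadratic left Bol algebra over ℝ, with adjoint maps l(u)(v) := u*v, R(u,v)(w) := [[w,u,v]], L(u,v)(w) := [[u,v,w]], and coadjoint maps on T* given by l'(x)(f) := -f∘l(x), R'(x,y)(f) := f∘R(y,x), L'(x,y)(f) := -f∘L(x,y). Let b♯: T → T* be the linear map b♯(x)(y) := b(x,y). Then b♯ is a linear bijection satisfying b♯(l(x)(z)) = l'(x)(b♯(z)) and b♯(R(x,y)(z)) = R'(x,y)(b♯(z)) for all x,y,z ∈ T; that is, the adjoint representation of (T,b) is isomorphic to its coadjoint representation. -/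

import Mathlib

/-- A left Bol algebra over ℝ: a real vector space with a bilinear operation `mul`
and a trilinear operation `tri` satisfying (T01), (T02), (T1), (T2) and (T3). -/
structure LeftBolAlgebra (T : Type*) [AddCommGroup T] [Module ℝ T] where
  mul : T →ₗ[ℝ] T →ₗ[ℝ] T
  tri : T →ₗ[ℝ] T →ₗ[ℝ] T →ₗ[ℝ] T
  mul_anticomm : ∀ x y : T, mul x y = - mul y x
  tri_skew : ∀ x y z : T, tri x y z = - tri y x z
  tri_cyclic : ∀ x y z : T, tri x y z + tri y z x + tri z x y = 0
  tri_leibniz : ∀ u v x y z : T,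
    tri u v (tri x y z) = tri (tri u v x) y z + tri x (tri u v y) z + tri x y (tri u v z)
  bol : ∀ u v x y : T, tri u v (mul x y) =
    mul (tri u v x) y + mul x (tri u v y) + tri x y (mul u v) - mul (mul x y) (mul u v)

variable {T : Type*} [AddCommGroup T] [Module ℝ T]

/-- The adjoint map R(u,v) : w ↦ [[w,u,v]]. -/
def LeftBolAlgebra.Rmap (A : LeftBolAlgebra T) (u v : T) : T →ₗ[ℝ] T where
  toFun w := A.tri w u v
  map_add' a c := by simp
  map_smul' r a := by simp

/-- The coadjoint map l'(x) : T* → T*, l'(x)(f) = -f ∘ l(x), where l(x)(v) = x*v. -/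
def LeftBolAlgebra.coadL (A : LeftBolAlgebra T) (x : T) :
    Module.End ℝ (Module.Dual ℝ T) :=
  - (A.mul x).dualMap

/-- The coadjoint map R'(x,y) : T* → T*, R'(x,y)(f) = f ∘ R(y,x). -/
def LeftBolAlgebra.coadTheta (A : LeftBolAlgebra T) (x y : T) :
    Module.End ℝ (Module.Dual ℝ T) :=
  (A.Rmap y x).dualMap

/-!
Since `b♯` is injective and `dim T = dim T*`, it is a linear bijection. That this
bijection intertwines the adjoint and coadjoint actions is exactly the invariance of `b`:
for `l` it is `b(x*y, z) = b(x, y*z)` combined with anticommutativity of `*`, and for `R` it is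
`b([[x,y,z]], u) = b([[z,u,x]], y)` combined with skew-symmetry of `[[·,·,·]]` and symmetry of `b`.
-/

theorem LinearMap.BilinForm.bijective_of_separatingLeft {K V : Type*} [Field K] [AddCommGroup V]
    [Module K V] [FiniteDimensional K V] {B : LinearMap.BilinForm K V} (hB : B.SeparatingLeft) :
    Function.Bijective B :=
  (B.linearEquivOfInjective (LinearMap.ker_eq_bot.mp (separatingLeft_iff_ker_eq_bot.mp hB))
    Subspace.dual_finrank_eq.symm).bijective

namespace LeftBolAlgebra

variable (A : LeftBolAlgebra T) (b : LinearMap.BilinForm ℝ T)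

@[simp]
theorem Rmap_apply (u v w : T) : A.Rmap u v w = A.tri w u v := rfl

@[simp]
theorem coadL_apply (x : T) (f : Module.Dual ℝ T) (w : T) : A.coadL x f w = -f (A.mul x w) := rfl

@[simp]
theorem coadTheta_apply (x y : T) (f : Module.Dual ℝ T) (w : T) :
    A.coadTheta x y f w = f (A.tri w y x) := rfl

theorem bilin_mul_eq_coadL (hassoc : ∀ x y z : T, b (A.mul x y) z = b x (A.mul y z)) (x z : T) :
    b (A.mul x z) = A.coadL x (b z) := by
  ext w
  rw [coadL_apply, A.mul_anticomm, map_neg, LinearMap.neg_apply, hassoc]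

theorem bilin_Rmap_eq_coadTheta (hsymm : ∀ x y : T, b x y = b y x)
    (hinv : ∀ x y z u : T, b (A.tri x y z) u = b (A.tri z u x) y) (x y z : T) :
    b (A.Rmap x y z) = A.coadTheta x y (b z) := by
  ext w
  rw [Rmap_apply, coadTheta_apply]
  calc b (A.tri z x y) w
      = -b (A.tri x z y) w := by rw [A.tri_skew, map_neg, LinearMap.neg_apply]
    _ = -b (A.tri y w x) z := by rw [hinv]
    _ = b (A.tri w y x) z := by rw [A.tri_skew y, map_neg, LinearMap.neg_apply, neg_neg]
    _ = b z (A.tri w y x) := hsymm _ _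

end LeftBolAlgebra

/-- For a finite-dimensional quadratic left Bol algebra (T,b), the map
b♯ : T → T*, b♯(x)(y) = b(x,y), is a linear bijection intertwining the adjoint
representation (l, R, L) with the coadjoint representation (l', R', L'):
b♯(l(x)(z)) = l'(x)(b♯(z)) and b♯(R(x,y)(z)) = R'(x,y)(b♯(z)).  Hence the adjoint and
coadjoint representations of (T,b) are isomorphic. -/
theorem adjoint_iso_coadjoint
    [FiniteDimensional ℝ T]
    (A : LeftBolAlgebra T) (b : LinearMap.BilinForm ℝ T)
    (hsymm : ∀ x y : T, b x y = b y x)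
    (hnondeg : ∀ x : T, (∀ y : T, b x y = 0) → x = 0)
    (hassoc : ∀ x y z : T, b (A.mul x y) z = b x (A.mul y z))
    (hinv : ∀ x y z u : T, b (A.tri x y z) u = b (A.tri z u x) y) :
    Function.Bijective (fun x : T => (b x : Module.Dual ℝ T)) ∧
    (∀ x z : T, b (A.mul x z) = A.coadL x (b z)) ∧
    (∀ x y z : T, b (A.Rmap x y z) = A.coadTheta x y (b z)) :=
  ⟨LinearMap.BilinForm.bijective_of_separatingLeft hnondeg, A.bilin_mul_eq_coadL b hassoc,
    A.bilin_Rmap_eq_coadTheta b hsymm hinv⟩
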